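/- Let X be a random variable supported on (a,b), φ twice differentiable and convex on (a,b). Suppose there exists an interval I ⊂ (a,b) with inf_{x∈I} φ''(x) > 0, P(X ∈ I) > 0, and Var(X | X ∈ I) > 0. Then E[φ(X)] - φ(E[X]) > 0 (the Jensen gap is strictly positive). -/

import Mathlib

/-!
Let `ℓ` be the tangent line of `φ` at `m = E[X]`. Convexity gives `ℓ ≤ φ` on `(a,b)`, and
`E[ℓ(X)] = φ(m)`, so the Jensen gap is `E[φ(X) - ℓ(X)]` with a nonnegative integrand. If it
vanished, `X` would a.s. lie in the contact set `{φ = ℓ}` on the event `{X ∈ I}`. But on `I` this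
contact set has at most one point: `φ - ℓ` is convex and nonnegative, so if it vanished at two
points it would vanish between them, making `φ` affine there and `φ'' = 0`. Hence `X` would be
a.s. constant given `X ∈ I`, contradicting the positive conditional variance.
-/

open MeasureTheory Set Filter Topology

section Integral

variable {α : Type*} [MeasurableSpace α] {μ : Measure α}

lemma integral_pos_of_ae_pos [NeZero μ] {f : α → ℝ} (hfi : Integrable f μ)
    (hf : ∀ᵐ x ∂μ, 0 < f x) : 0 < ∫ x, f x ∂μ := by
  refine (integral_pos_iff_support_of_nonneg_ae (hf.mono fun _ hx => hx.le) hfi).2 ?_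
  calc 0 < μ univ := Measure.measure_univ_pos.2 (NeZero.ne μ)
    _ ≤ μ (Function.support f) := measure_mono_ae (hf.mono fun _ hx _ => hx.ne')

lemma integral_mem_Ioo_of_ae_mem_Ioo [IsProbabilityMeasure μ] {X : α → ℝ} {a b : ℝ}
    (hX : ∀ᵐ x ∂μ, X x ∈ Ioo a b) (hXi : Integrable X μ) : ∫ x, X x ∂μ ∈ Ioo a b := by
  have ha := integral_pos_of_ae_pos (f := fun x => X x - a) (hXi.sub (integrable_const a))
    (hX.mono fun _ hx => sub_pos.2 hx.1)
  have hb := integral_pos_of_ae_pos (f := fun x => b - X x) ((integrable_const b).sub hXi)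
    (hX.mono fun _ hx => sub_pos.2 hx.2)
  rw [integral_sub hXi (integrable_const a)] at ha
  rw [integral_sub (integrable_const b) hXi] at hb
  simp only [integral_const, probReal_univ, one_smul, sub_pos] at ha hb
  exact ⟨ha, hb⟩

lemma ae_eq_const_of_ae_mem_subsingleton {β : Type*} [Nonempty β] {X : α → β} {T : Set β}
    (hT : T.Subsingleton) (h : ∀ᵐ x ∂μ, X x ∈ T) : ∃ z, ∀ᵐ x ∂μ, X x = z := by
  rcases hT.eq_empty_or_singleton with rfl | ⟨z, rfl⟩
  · exact ⟨Classical.arbitrary β, h.mono fun _ hx => hx.elim⟩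
  · exact ⟨z, h⟩

/-- If `μ S` is `0` or `∞`, every quotient here is a junk `0`. -/
lemma setIntegral_sq_div_sub_sq_eq_zero_of_ae_eq_const {S : Set α} {X : α → ℝ} {z : ℝ}
    (h : ∀ᵐ x ∂μ.restrict S, X x = z) :
    (∫ x in S, X x ^ 2 ∂μ) / (μ S).toReal - ((∫ x in S, X x ∂μ) / (μ S).toReal) ^ 2 = 0 := by
  rw [integral_congr_ae (h.mono fun _ hx => by rw [hx]), integral_congr_ae h,
    setIntegral_const, setIntegral_const, smul_eq_mul, smul_eq_mul, measureReal_def]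
  rcases eq_or_ne (μ S).toReal 0 with h0 | h0
  · simp [h0]
  · field_simp
    ring

end Integral

section Convex

variable {s I : Set ℝ} {f : ℝ → ℝ}

lemma ConvexOn.add_deriv_mul_sub_le (hf : ConvexOn ℝ s f) {x y : ℝ} (hx : x ∈ s) (hy : y ∈ s)
    (hd : DifferentiableAt ℝ f x) : f x + deriv f x * (y - x) ≤ f y := by
  rcases lt_trichotomy y x with hyx | rfl | hxy
  · have h := hf.slope_le_deriv hy hx hyx hd
    rw [slope_def_field, div_le_iff₀ (sub_pos.2 hyx)] at h
    nlinarith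
  · simp
  · have h := hf.deriv_le_slope hx hy hxy hd
    rw [slope_def_field, le_div_iff₀ (sub_pos.2 hxy)] at h
    nlinarith

lemma deriv_deriv_eq_zero_of_eventuallyEq_affine {x c d : ℝ}
    (h : f =ᶠ[𝓝 x] fun t => c * t + d) : deriv (deriv f) x = 0 := by
  have hderiv : deriv f =ᶠ[𝓝 x] fun _ => c :=
    h.eventuallyEq_nhds.mono fun y hy => by
      rw [hy.deriv_eq]
      simp [(((hasDerivAt_id' y).const_mul c).add_const d).deriv]
  rw [hderiv.deriv_eq, deriv_const]

lemma ConvexOn.eqOn_segment_of_le_of_eq {c d x y : ℝ} (hf : ConvexOn ℝ s f)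
    (hle : ∀ t ∈ s, c * t + d ≤ f t) (hx : x ∈ s) (hy : y ∈ s)
    (hfx : f x = c * x + d) (hfy : f y = c * y + d) :
    EqOn f (fun t => c * t + d) (segment ℝ x y) := by
  have hgap : ConvexOn ℝ s fun t => f t - (c * t + d) :=
    hf.sub (((LinearMap.lsmul ℝ ℝ c).concaveOn hf.1).add_const d)
  intro t ht
  have := hgap.le_on_segment hx hy ht
  simp only [hfx, hfy, sub_self, max_self, sub_nonpos] at this
  exact le_antisymm this (hle t (hf.1.segment_subset hx hy ht))

lemma ConvexOn.subsingleton_setOf_eq_affine {c d : ℝ} (hf : ConvexOn ℝ s f)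
    (hle : ∀ t ∈ s, c * t + d ≤ f t) (hI : I ⊆ s) (hIc : I.OrdConnected)
    (hf'' : ∀ x ∈ I, deriv (deriv f) x ≠ 0) : {x ∈ I | f x = c * x + d}.Subsingleton := by
  have hlt : ∀ x ∈ {x ∈ I | f x = c * x + d}, ∀ y ∈ {x ∈ I | f x = c * x + d}, ¬ x < y := by
    rintro x ⟨hxI, hfx⟩ y ⟨hyI, hfy⟩ hxy
    have hmid : (x + y) / 2 ∈ Ioo x y := ⟨by linarith, by linarith⟩
    have hEq : EqOn f (fun t => c * t + d) (Ioo x y) := fun t ht =>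
      hf.eqOn_segment_of_le_of_eq hle (hI hxI) (hI hyI) hfx hfy
        (segment_eq_Icc hxy.le ▸ Ioo_subset_Icc_self ht)
    exact hf'' _ (hIc.out hxI hyI (Ioo_subset_Icc_self hmid))
      (deriv_deriv_eq_zero_of_eventuallyEq_affine
        (eventuallyEq_of_mem (isOpen_Ioo.mem_nhds hmid) hEq))
  exact fun x hx y hy => le_antisymm (not_lt.1 (hlt y hy x hx)) (not_lt.1 (hlt x hx y hy))

end Convex

theorem stmt_18_general {Ω : Type*} [MeasureSpace Ω] [IsProbabilityMeasure (volume : Measure Ω)]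
    (a b : ℝ) (X : Ω → ℝ) (hXmeas : Measurable X)
    (hX : ∀ᵐ ω, X ω ∈ Ioo a b)
    (hXint : Integrable X)
    (φ : ℝ → ℝ)
    (hφint : Integrable (fun ω => φ (X ω)))
    (hconv : ConvexOn ℝ (Ioo a b) φ)
    (hdiff : ∀ x ∈ Ioo a b, DifferentiableAt ℝ φ x ∧ DifferentiableAt ℝ (deriv φ) x)
    (I : Set ℝ) (hI : I ⊆ Ioo a b) (hIconn : I.OrdConnected) (hImeas : MeasurableSet I)
    (δ : ℝ) (hδ : 0 < δ) (hφ'' : ∀ x ∈ I, δ ≤ deriv (deriv φ) x)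
    (hvar : 0 < (∫ ω in X ⁻¹' I, (X ω) ^ 2) / (volume (X ⁻¹' I)).toReal -
      ((∫ ω in X ⁻¹' I, X ω) / (volume (X ⁻¹' I)).toReal) ^ 2) :
    0 < (∫ ω, φ (X ω)) - φ (∫ ω, X ω) := by
  set m := ∫ ω, X ω
  have hm : m ∈ Ioo a b := integral_mem_Ioo_of_ae_mem_Ioo hX hXint
  set c := deriv φ m
  set d := φ m - c * m
  have htangent : ∀ t ∈ Ioo a b, c * t + d ≤ φ t := fun t ht => by
    linarith [hconv.add_deriv_mul_sub_le hm ht (hdiff m hm).1]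
  have hℓint : Integrable (fun ω => c * X ω + d) := (hXint.const_mul c).add (integrable_const d)
  have hgap : (∫ ω, φ (X ω)) - φ m = ∫ ω, (φ (X ω) - (c * X ω + d)) := by
    rw [integral_sub hφint hℓint, integral_add (hXint.const_mul c) (integrable_const d),
      integral_const_mul, integral_const]
    simp only [probReal_univ, one_smul, d, m]
    ring
  have hnonneg : 0 ≤ᵐ[volume] fun ω => φ (X ω) - (c * X ω + d) :=
    hX.mono fun ω hω => sub_nonneg.2 (htangent _ hω)
  rw [hgap]
  refine (integral_nonneg_of_ae hnonneg).lt_of_ne fun hzero => hvar.ne' ?_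
  have hcontact : ∀ᵐ ω ∂volume.restrict (X ⁻¹' I), X ω ∈ {x ∈ I | φ x = c * x + d} := by
    filter_upwards [ae_restrict_mem (hXmeas hImeas),
      ae_restrict_of_ae ((integral_eq_zero_iff_of_nonneg_ae hnonneg (hφint.sub hℓint)).1
        hzero.symm)] with ω hωI hω
    exact ⟨hωI, sub_eq_zero.1 hω⟩
  obtain ⟨z, hz⟩ := ae_eq_const_of_ae_mem_subsingleton
    (hconv.subsingleton_setOf_eq_affine htangent hI hIconn
      fun x hx => (hδ.trans_le (hφ'' x hx)).ne') hcontact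
  exact setIntegral_sq_div_sub_sq_eq_zero_of_ae_eq_const hz

/-- Strict positivity of the Jensen gap: if `φ` is convex and twice differentiable on
`(a,b)`, and there is an interval `I ⊆ (a,b)` on which `φ''` is bounded below by a
positive constant, with `P(X ∈ I) > 0` and positive conditional variance of `X` given
`X ∈ I`, then `E[φ(X)] - φ(E[X]) > 0`. -/
theorem stmt_18 {Ω : Type*} [MeasureSpace Ω] [IsProbabilityMeasure (volume : Measure Ω)]
    (a b : ℝ) (hab : a < b) (X : Ω → ℝ) (hXmeas : Measurable X)
    (hX : ∀ᵐ ω, X ω ∈ Ioo a b)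
    (hXint : Integrable X)
    (φ : ℝ → ℝ)
    (hφint : Integrable (fun ω => φ (X ω)))
    (hconv : ConvexOn ℝ (Ioo a b) φ)
    (hdiff : ∀ x ∈ Ioo a b, DifferentiableAt ℝ φ x ∧ DifferentiableAt ℝ (deriv φ) x)
    (I : Set ℝ) (hI : I ⊆ Ioo a b) (hIconn : I.OrdConnected) (hImeas : MeasurableSet I)
    (δ : ℝ) (hδ : 0 < δ) (hφ'' : ∀ x ∈ I, δ ≤ deriv (deriv φ) x)
    (hpos : 0 < volume (X ⁻¹' I))
    (hvar : 0 < (∫ ω in X ⁻¹' I, (X ω) ^ 2) / (volume (X ⁻¹' I)).toReal -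
      ((∫ ω in X ⁻¹' I, X ω) / (volume (X ⁻¹' I)).toReal) ^ 2) :
    0 < (∫ ω, φ (X ω)) - φ (∫ ω, X ω) :=
  stmt_18_general a b X hXmeas hX hXint φ hφint hconv hdiff I hI hIconn hImeas δ hδ hφ'' hvar
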